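/- arXiv:2402.06408 — 2 statements merged into one kernel-verified Lean document; each statement's English description precedes it below -/
import Mathlib

section
/- Let ε > 0 and let (s_n)_{n∈ℤ} be a sequence of real numbers that is ε-convex at critical points, i.e. for every n ∈ ℤ, if s_{n+1} − s_n ≥ −ε then s_{n+2} − s_{n+1} ≥ ε. Then for every positive integer N, the sequence (s_{nN})_{n∈ℤ} is (N·ε)-convex at critical points. -/
/-- A sequence `s : ℤ → ℝ` is `ε`-convex at critical points if whenever
`s (n+1) - s n ≥ -ε`, one has `s (n+2) - s (n+1) ≥ ε`. -/
def EpsConvexAtCritical (ε : ℝ) (s : ℤ → ℝ) : Prop :=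
  ∀ n : ℤ, s (n + 1) - s n ≥ -ε → s (n + 2) - s (n + 1) ≥ ε

/-!
Once an increment of `s` is `≥ -ε`, every later increment is `≥ ε` (by induction, as `ε ≥ -ε`).
If the coarse increment `s((n+1)N) - s(nN)` is `≥ -Nε`, one of the `N` fine increments it is the
sum of is `≥ -ε`, so all `N` fine increments making up `s((n+2)N) - s((n+1)N)` are `≥ ε`.
-/

open Finset

theorem sub_eq_sum_range_sub (s : ℤ → ℝ) (a : ℤ) (N : ℕ) :
    s (a + N) - s a = ∑ i ∈ range N, (s (a + i + 1) - s (a + i)) := by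
  have := sum_range_sub (fun i : ℕ => s (a + i)) N
  push_cast [← add_assoc] at this
  simpa using this.symm

theorem exists_sub_ge_of_sub_ge (s : ℤ → ℝ) (a : ℤ) {N : ℕ} (hN : 0 < N) {c : ℝ}
    (hs : s (a + N) - s a ≥ -(N * c)) : ∃ i < N, s (a + i + 1) - s (a + i) ≥ -c := by
  have hsum : ∑ _i ∈ range N, -c ≤ ∑ i ∈ range N, (s (a + i + 1) - s (a + i)) := by
    rw [sub_eq_sum_range_sub] at hs
    simpa using hs
  obtain ⟨i, hi, hci⟩ := exists_le_of_sum_le (nonempty_range_iff.mpr hN.ne') hsum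
  exact ⟨i, mem_range.mp hi, hci⟩

theorem sub_ge_of_forall_sub_ge (s : ℤ → ℝ) (a : ℤ) (N : ℕ) {c : ℝ}
    (hs : ∀ i < N, s (a + i + 1) - s (a + i) ≥ c) : s (a + N) - s a ≥ N * c := by
  have := card_nsmul_le_sum (range N) _ c fun i hi => hs i (mem_range.mp hi)
  simpa [sub_eq_sum_range_sub] using this

theorem EpsConvexAtCritical.sub_ge_of_lt {ε : ℝ} {s : ℤ → ℝ} (h : EpsConvexAtCritical ε s)
    (hε : 0 ≤ ε) {k : ℤ} (hk : s (k + 1) - s k ≥ -ε) {m : ℤ} (hkm : k < m) :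
    s (m + 1) - s m ≥ ε := by
  induction m, hkm using Int.leInduction with
  | base => simpa [add_assoc] using h k hk
  | succ m _ ih => simpa [add_assoc] using h m (by linarith)

/-- Coarsifying an `ε`-convex sequence: if `(s_n)` is `ε`-convex at critical points,
then `(s_{nN})` is `Nε`-convex at critical points. -/
theorem coarsify_eps_convex (ε : ℝ) (hε : 0 < ε) (s : ℤ → ℝ)
    (h : EpsConvexAtCritical ε s) (N : ℕ) (hN : 0 < N) :
    EpsConvexAtCritical ((N : ℝ) * ε) (fun n => s (n * N)) := by
  intro n hn
  have h₁ : (n + 1) * (N : ℤ) = n * N + N := by ring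
  have h₂ : (n + 2) * (N : ℤ) = n * N + N + N := by ring
  simp only [h₁, h₂] at hn ⊢
  obtain ⟨i, hi, hdi⟩ := exists_sub_ge_of_sub_ge s _ hN hn
  exact sub_ge_of_forall_sub_ge s _ N fun j _ => h.sub_ge_of_lt hε.le hdi (by omega)
end

section
/- Let G be a group acting on a metric space X by isometries, let ε > 0, and assume X is ε-chain-geodesic in the following sense: for all x, y ∈ X there exist N ∈ ℕ with N ≤ d(x,y)/ε + 1 and points x = p₀, p₁, …, p_N = y in X with d(p_i, p_{i+1}) ≤ ε for all 0 ≤ i < N (every geodesic metric space has this property for every ε > 0). Let D ⊆ X and o ∈ D be such that X = ⋃_{g∈G} g·D, and let F ⊆ G be a finite subset such that for every g ∈ G with g ∉ F, the set g·D is disjoint from the closed ε-neighborhood of D. Then: (i) for every g ∈ G there exists N ∈ ℕ with N ≤ d(o, g·o)/ε + 1 such that g belongs to the N-fold product set F^N (in particular F generates G); and (ii) setting A = max over f ∈ F of d(o, f·o), for every N ∈ ℕ and every g ∈ F^N one has d(o, g·o) ≤ A·N. Consequently the orbit map g ↦ g·o is a quasi-isometric embedding of G, with the word metric of F, into X. 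-/
open Pointwise

/-- A variant of the Milnor–Schwarz lemma: if a group `G` acts by isometries on an
`ε`-chain-geodesic metric space `X`, `D ⊆ X` contains `o` and its `G`-translates cover `X`,
and all translates `g • D` with `g` outside a finite set `F` miss the closed
`ε`-neighborhood of `D`, then (i) every `g ∈ G` lies in `F ^ N` for some
`N ≤ d(o, g•o)/ε + 1`, and (ii) for `A` bounding `d(o, f•o)` over `f ∈ F`, every
`g ∈ F ^ N` satisfies `d(o, g•o) ≤ A N`. Hence the orbit map is a quasi-isometric
embedding. -/
theorem milnor_schwarz_variant {X : Type*} [MetricSpace X] {G : Type*} [Group G]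
    [MulAction G X] (hiso : ∀ g : G, Isometry (fun x : X => g • x))
    (ε : ℝ) (hε : 0 < ε)
    (hchain : ∀ x y : X, ∃ N : ℕ, (N : ℝ) ≤ dist x y / ε + 1 ∧
      ∃ p : ℕ → X, p 0 = x ∧ p N = y ∧ ∀ i < N, dist (p i) (p (i + 1)) ≤ ε)
    (D : Set X) (o : X) (ho : o ∈ D)
    (hcov : ∀ x : X, ∃ g : G, x ∈ g • D)
    (F : Set G) (hF : F.Finite)
    (hdisj : ∀ g : G, g ∉ F → Disjoint (g • D) {x : X | Metric.infDist x D ≤ ε}) :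
    (∀ g : G, ∃ N : ℕ, (N : ℝ) ≤ dist o (g • o) / ε + 1 ∧ g ∈ F ^ N) ∧
    (∀ A : ℝ, (∀ f ∈ F, dist o (f • o) ≤ A) →
      ∀ N : ℕ, ∀ g ∈ F ^ N, dist o (g • o) ≤ A * N) := by
  choose c hc using hcov
  -- Key lemma: a chain of length N ≥ 1 from o to g • o gives g ∈ F ^ N.
  have key : ∀ (g : G) (N : ℕ), 0 < N →
      (∃ p : ℕ → X, p 0 = o ∧ p N = g • o ∧ ∀ i < N, dist (p i) (p (i + 1)) ≤ ε) →
      g ∈ F ^ N := by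
    rintro g N hN ⟨p, hp0, hpN, hstep⟩
    set q : ℕ → G := fun i => if i = 0 then 1 else if N ≤ i then g else c (p i) with hq
    have hmem : ∀ i ≤ N, p i ∈ q i • D := by
      intro i hi
      rcases Nat.eq_zero_or_pos i with rfl | hipos
      · simp only [hq, if_pos rfl, one_smul, hp0]; exact ho
      · by_cases hiN : N ≤ i
        · have hiN' : i = N := le_antisymm hi hiN
          have hqi : q i = g := by simp only [hq]; rw [if_neg hipos.ne', if_pos hiN]
          rw [hqi, hiN', hpN]
          exact Set.smul_mem_smul_set ho
        · have hqi : q i = c (p i) := by simp only [hq]; rw [if_neg hipos.ne', if_neg hiN]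
          rw [hqi]; exact hc (p i)
    have hF' : ∀ i < N, (q i)⁻¹ * q (i + 1) ∈ F := by
      intro i hi
      by_contra hnot
      have hd := hdisj _ hnot
      have h1 : (q i)⁻¹ • p (i + 1) ∈ ((q i)⁻¹ * q (i + 1)) • D := by
        rw [mul_smul]
        exact Set.smul_mem_smul_set (hmem (i + 1) hi)
      have h2 : (q i)⁻¹ • p i ∈ D :=
        Set.mem_smul_set_iff_inv_smul_mem.mp (hmem i hi.le)
      have h3 : Metric.infDist ((q i)⁻¹ • p (i + 1)) D ≤ ε := by
        calc Metric.infDist ((q i)⁻¹ • p (i + 1)) D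
            ≤ dist ((q i)⁻¹ • p (i + 1)) ((q i)⁻¹ • p i) :=
              Metric.infDist_le_dist_of_mem h2
          _ = dist (p (i + 1)) (p i) := (hiso (q i)⁻¹).dist_eq _ _
          _ ≤ ε := by rw [dist_comm]; exact hstep i hi
      exact Set.disjoint_left.mp hd h1 h3
    have hind : ∀ i ≤ N, q i ∈ F ^ i := by
      intro i
      induction i with
      | zero =>
        intro _
        simp only [hq, if_pos rfl, pow_zero]
        exact Set.mem_one.mpr rfl
      | succ n ih =>
        intro hn
        have h1 : q n ∈ F ^ n := ih (Nat.le_of_succ_le hn)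
        have h2 : (q n)⁻¹ * q (n + 1) ∈ F := hF' n hn
        have h3 : q (n + 1) = q n * ((q n)⁻¹ * q (n + 1)) := by group
        rw [pow_succ, h3]
        exact Set.mul_mem_mul h1 h2
    have hqN : q N = g := by
      simp only [hq]; rw [if_neg hN.ne', if_pos le_rfl]
    exact hqN ▸ hind N le_rfl
  constructor
  · intro g
    obtain ⟨N, hNb, p, hp0, hpN, hstep⟩ := hchain o (g • o)
    rcases Nat.eq_zero_or_pos N with rfl | hNpos
    · -- then g • o = o, and g ∈ F ^ 1
      have hfix : g • o = o := hpN ▸ hp0.symm ▸ rfl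
      refine ⟨1, ?_, ?_⟩
      · have : (0 : ℝ) ≤ dist o (g • o) / ε := div_nonneg dist_nonneg hε.le
        push_cast; linarith
      · exact key g 1 one_pos ⟨fun _ => o, rfl, hfix.symm, by
          intro i hi; simp [hε.le]⟩
    · exact ⟨N, hNb, key g N hNpos ⟨p, hp0, hpN, hstep⟩⟩
  · intro A hA N
    induction N with
    | zero =>
      intro g hg
      rw [pow_zero] at hg
      rw [Set.mem_one.mp hg]
      simp
    | succ n ih =>
      intro g hg
      rw [pow_succ] at hg
      obtain ⟨a, ha, f, hf, rfl⟩ := hg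
      have h1 : dist o (a • o) ≤ A * n := ih a ha
      have h2 : dist (a • o) ((a * f) • o) = dist o (f • o) := by
        rw [mul_smul]
        exact (hiso a).dist_eq o (f • o)
      calc dist o ((a * f) • o) ≤ dist o (a • o) + dist (a • o) ((a * f) • o) :=
            dist_triangle _ _ _
        _ ≤ A * n + A := by rw [h2]; exact add_le_add h1 (hA f hf)
        _ = A * ((n + 1 : ℕ) : ℝ) := by push_cast; ring
end
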